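/- The set {(f, x) ∈ M_{∞,1} × K : limsup_{n→∞} f_n(x) = 1 and liminf_{n→∞} f_n(x) = −1} is a dense G_δ subset of M_{∞,1} × K. In particular, there is a dense G_δ set of f ∈ M_{∞,1} such that {x ∈ K : limsup_{n→∞} f_n(x) = 1 and liminf_{n→∞} f_n(x) = −1} is a dense G_δ subset of K. -/

import Mathlib

/-!
On `M_{∞,1}` all values lie in `[-1, 1]`, so `limsup f_n(x) = 1` and `liminf f_n(x) = -1` say
that for every `k` the value `f_n(x)` is infinitely often above `1 - 2⁻ᵏ` and infinitely often
below `-(1 - 2⁻ᵏ)`. The evaluations `f ↦ f_n(A)` are continuous on `M_{∞,1}` and `x ↦ x_n` is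
locally constant on `K`, so this is a countable intersection of open sets, in `M_{∞,1} × K` as
well as in each slice `{f} × K`.

Call `f` oscillating if below every atom there are atoms, arbitrarily deep, on which `f` is above
`1 - 2⁻ᵏ`, and others on which it is below `-(1 - 2⁻ᵏ)`. This is again a `G_δ` condition, and
for oscillating `f` the slice is a countable intersection of dense open subsets of the compact
space `K`, hence dense by Baire's theorem. Oscillating martingales are dense in `M_{∞,1}`: keep
`(1 - θ) g` up to level `N`, and afterwards, whenever an atom splits, move the value of its
smallest child (of relative weight `λ ≤ 1/2`) by `θ 2⁻ʲ⁻¹` towards `(-1)ʲ` while its siblings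
move by `λ / (1 - λ)` times as much the other way. Phase `j` ends once the value is within
`θ 2⁻ʲ` of `(-1)ʲ`; siblings restart in phase `j + 2`, whose smaller margin absorbs their
displacement, so every value stays in `[-1, 1]`. Assumption (A) makes every path of smallest
children split infinitely often, so along it all phases are completed. Density of the set of
pairs follows from the two density statements.
-/

open MeasureTheory Filter Set
open scoped ENNReal Topology

noncomputable section

namespace MartingalePaper

variable {Ω : Type}

/-- The discrete topology on `Set Ω`; each finite partition `D n` thus carries the
discrete topology, and `ℕ → Set Ω` the product topology. -/
instance : TopologicalSpace (Set Ω) := ⊥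

/-- `(D n)` is a sequence of finite measurable partitions of `Ω`, each refined by the next. -/
def IsPartitionSeq [MeasurableSpace Ω] (D : ℕ → Finset (Set Ω)) : Prop :=
  (∀ n, ∀ A ∈ D n, MeasurableSet A) ∧
  (∀ n, ∀ A ∈ D n, A.Nonempty) ∧
  (∀ n, (D n : Set (Set Ω)).PairwiseDisjoint id) ∧
  (∀ n, ⋃ A ∈ D n, A = (Set.univ : Set Ω)) ∧
  (∀ n, ∀ A ∈ D (n + 1), ∃ B ∈ D n, A ⊆ B)

/-- Standing Assumptions (A). -/
def AssumptionA [MeasurableSpace Ω] (P : Measure Ω) (D : ℕ → Finset (Set Ω)) : Prop :=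
  (∀ n, ∀ A ∈ D n, 0 < P A) ∧ (∀ n, ∀ A ∈ D n, ∃ m, n < m ∧ A ∉ D m)

/-- The compact metrizable space `K` associated to the filtration: decreasing chains of atoms. -/
abbrev Kt (D : ℕ → Finset (Set Ω)) : Type _ :=
  {x : ℕ → Set Ω // (∀ n, x n ∈ D n) ∧ ∀ n m : ℕ, n ≤ m → x m ⊆ x n}

/-- The function on `Ω` determined by the values `f n A` on the atoms `A ∈ D n`. -/
def mval (D : ℕ → Finset (Set Ω)) (f : ℕ → Set Ω → ℝ) (n : ℕ) (w : Ω) : ℝ :=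
  ∑ A ∈ D n, A.indicator (fun _ => f n A) w

/-- A martingale adapted to the filtration `(σ(D n))`, in its canonical representation by
the (a.e. constant) values on the atoms:  `f n A` is the value of the `n`-th function on
the atom `A ∈ D n`. -/
def IsMart [MeasurableSpace Ω] (P : Measure Ω) (D : ℕ → Finset (Set Ω))
    (f : ℕ → Set Ω → ℝ) : Prop :=
  (∀ n, ∀ A : Set Ω, A ∉ D n → f n A = 0) ∧
  ∀ n m : ℕ, n ≤ m → ∀ A ∈ D n,
    ∫ w in A, mval D f n w ∂P = ∫ w in A, mval D f m w ∂P

/-- `‖f_n‖_{L^p}`. -/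
def lpNorm [MeasurableSpace Ω] (P : Measure Ω) (D : ℕ → Finset (Set Ω)) (p : ℝ≥0∞)
    (f : ℕ → Set Ω → ℝ) (n : ℕ) : ℝ≥0∞ :=
  eLpNorm (mval D f n) p P

/-- `‖f‖_p = sup_n ‖f_n‖_{L^p}`. -/
def martNorm [MeasurableSpace Ω] (P : Measure Ω) (D : ℕ → Finset (Set Ω)) (p : ℝ≥0∞)
    (f : ℕ → Set Ω → ℝ) : ℝ≥0∞ :=
  ⨆ n, lpNorm P D p f n

/-- `M_p`, the space of `L^p`-bounded martingales adapted to the filtration. -/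
def Mart [MeasurableSpace Ω] (P : Measure Ω) (D : ℕ → Finset (Set Ω)) (p : ℝ≥0∞) : Type _ :=
  {f : ℕ → Set Ω → ℝ // IsMart P D f ∧ martNorm P D p f ≠ ∞}

/-- The norm topology on `M_p`: the topology generated by the balls of the norm `‖·‖_p`
(which is exactly the topology of this metric). -/
instance [MeasurableSpace Ω] (P : Measure Ω) (D : ℕ → Finset (Set Ω)) (p : ℝ≥0∞) :
    TopologicalSpace (Mart P D p) :=
  TopologicalSpace.generateFrom
    {s | ∃ (f : Mart P D p) (ε : ℝ≥0∞), 0 < ε ∧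
      s = {g : Mart P D p | martNorm P D p (fun k A => g.1 k A - f.1 k A) < ε}}

/-- `limsup f_n(x) = +∞` and `liminf f_n(x) = -∞`. -/
def DivergesAt (D : ℕ → Finset (Set Ω)) (f : ℕ → Set Ω → ℝ) (x : Kt D) : Prop :=
  Filter.limsup (fun n => ((f n (x.1 n) : ℝ) : EReal)) Filter.atTop = ⊤ ∧
  Filter.liminf (fun n => ((f n (x.1 n) : ℝ) : EReal)) Filter.atTop = ⊥

/-- `M_{p,1}`, the martingales of `‖·‖_p`-norm at most one. -/
def MartBall [MeasurableSpace Ω] (P : Measure Ω) (D : ℕ → Finset (Set Ω)) (p : ℝ≥0∞) :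
    Type _ :=
  {f : ℕ → Set Ω → ℝ // IsMart P D f ∧ martNorm P D p f ≤ 1}

/-- The topology of pointwise convergence on `M_{p,1}`, inherited from the product
`∏ₙ L^p(Σ_n)` with coordinatewise norm topologies: it is generated by the subbasic sets
given by a coordinate `n` and an `L^p`-ball in that coordinate. -/
instance [MeasurableSpace Ω] (P : Measure Ω) (D : ℕ → Finset (Set Ω)) (p : ℝ≥0∞) :
    TopologicalSpace (MartBall P D p) :=
  TopologicalSpace.generateFrom
    {s | ∃ (f : MartBall P D p) (n : ℕ) (ε : ℝ≥0∞), 0 < ε ∧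
      s = {g : MartBall P D p | lpNorm P D p (fun k A => g.1 k A - f.1 k A) n < ε}}

/-- `limsup f_n(x) = 1` and `liminf f_n(x) = -1`. -/
def OscFullAt (D : ℕ → Finset (Set Ω)) (f : ℕ → Set Ω → ℝ) (x : Kt D) : Prop :=
  Filter.limsup (fun n => ((f n (x.1 n) : ℝ) : EReal)) Filter.atTop = (1 : EReal) ∧
  Filter.liminf (fun n => ((f n (x.1 n) : ℝ) : EReal)) Filter.atTop = (-1 : EReal)

open scoped Classical

instance : DiscreteTopology (Set Ω) := ⟨rfl⟩

section Atoms
variable {D : ℕ → Finset (Set Ω)} {m : ℕ} {A B : Set Ω}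

def ancestor (D : ℕ → Finset (Set Ω)) (n : ℕ) (B : Set Ω) : Set Ω :=
  if h : ∃ A ∈ D n, B ⊆ A then h.choose else ∅

def children (D : ℕ → Finset (Set Ω)) (m : ℕ) (A : Set Ω) : Finset (Set Ω) :=
  (D (m + 1)).filter (· ⊆ A)

theorem mem_children : B ∈ children D m A ↔ B ∈ D (m + 1) ∧ B ⊆ A :=
  Finset.mem_filter

theorem mval_sub {f g : ℕ → Set Ω → ℝ} : mval D (f - g) m = mval D f m - mval D g m := by
  ext w
  simp only [mval, Pi.sub_apply, ← Finset.sum_sub_distrib, indicator_sub]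

variable [MeasurableSpace Ω] {n : ℕ}

namespace IsPartitionSeq

theorem exists_mem (hp : IsPartitionSeq D) (n : ℕ) (w : Ω) : ∃ A ∈ D n, w ∈ A := by
  simpa using (hp.2.2.2.1 n).ge (mem_univ w)

theorem eq_of_mem (hp : IsPartitionSeq D) (hA : A ∈ D n) (hB : B ∈ D n) {w : Ω} (hwA : w ∈ A)
    (hwB : w ∈ B) : A = B := by
  by_contra h
  exact disjoint_left.1 (hp.2.2.1 n hA hB h) hwA hwB

theorem exists_superset (hp : IsPartitionSeq D) (hnm : n ≤ m) (hB : B ∈ D m) :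
    ∃ A ∈ D n, B ⊆ A := by
  induction m, hnm using Nat.le_induction generalizing B with
  | base => exact ⟨B, hB, subset_rfl⟩
  | succ m _ ih =>
    obtain ⟨C, hC, hBC⟩ := hp.2.2.2.2 m B hB
    obtain ⟨A, hA, hCA⟩ := ih hC
    exact ⟨A, hA, hBC.trans hCA⟩

theorem subset_of_mem (hp : IsPartitionSeq D) (hnm : n ≤ m) (hA : A ∈ D n) (hB : B ∈ D m)
    {w : Ω} (hwA : w ∈ A) (hwB : w ∈ B) : B ⊆ A := by
  obtain ⟨A', hA', hBA'⟩ := hp.exists_superset hnm hB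
  rwa [hp.eq_of_mem hA hA' hwA (hBA' hwB)]

end IsPartitionSeq

def chainOf (hp : IsPartitionSeq D) (w : Ω) : Kt D :=
  ⟨fun n => (hp.exists_mem n w).choose, fun n => (hp.exists_mem n w).choose_spec.1,
    fun n _ hnm => hp.subset_of_mem hnm (hp.exists_mem n w).choose_spec.1
      (hp.exists_mem _ w).choose_spec.1 (hp.exists_mem n w).choose_spec.2
      (hp.exists_mem _ w).choose_spec.2⟩

theorem chainOf_apply (hp : IsPartitionSeq D) {w : Ω} (hA : A ∈ D n) (hw : w ∈ A) :
    (chainOf hp w).1 n = A :=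
  hp.eq_of_mem (hp.exists_mem n w).choose_spec.1 hA (hp.exists_mem n w).choose_spec.2 hw

theorem ancestor_eq (hp : IsPartitionSeq D) (hB : B.Nonempty) (hA : A ∈ D n) (hBA : B ⊆ A) :
    ancestor D n B = A := by
  have h : ∃ A ∈ D n, B ⊆ A := ⟨A, hA, hBA⟩
  obtain ⟨w, hw⟩ := hB
  rw [ancestor, dif_pos h]
  exact hp.eq_of_mem h.choose_spec.1 hA (h.choose_spec.2 hw) (hBA hw)

theorem ancestor_of_mem_children (hp : IsPartitionSeq D) (hA : A ∈ D m)
    (hB : B ∈ children D m A) : ancestor D m B = A :=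
  ancestor_eq hp (hp.2.1 _ B (mem_children.1 hB).1) hA (mem_children.1 hB).2

theorem biUnion_children (hp : IsPartitionSeq D) (hA : A ∈ D m) :
    ⋃ B ∈ children D m A, B = A := by
  refine (iUnion₂_subset fun B hB => (mem_children.1 hB).2).antisymm fun w hw => ?_
  obtain ⟨B, hB, hwB⟩ := hp.exists_mem (m + 1) w
  exact mem_biUnion (mem_children.2 ⟨hB, hp.subset_of_mem m.le_succ hA hB hw hwB⟩) hwB

theorem children_nonempty (hp : IsPartitionSeq D) (hA : A ∈ D m) :
    (children D m A).Nonempty := by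
  obtain ⟨w, hw⟩ := hp.2.1 m A hA
  obtain ⟨B, hB, hwB⟩ := hp.exists_mem (m + 1) w
  exact ⟨B, mem_children.2 ⟨hB, hp.subset_of_mem m.le_succ hA hB hw hwB⟩⟩

theorem children_eq_singleton (hp : IsPartitionSeq D) (hA : A ∈ D m)
    (h : (children D m A).card = 1) : children D m A = {A} := by
  obtain ⟨B, hB⟩ := Finset.card_eq_one.1 h
  have hBA := biUnion_children hp hA
  simp only [hB, Finset.mem_singleton, iUnion_iUnion_eq_left] at hBA
  rw [hB, hBA]

theorem mem_of_children_card_eq_one (hp : IsPartitionSeq D) (hA : A ∈ D m)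
    (h : (children D m A).card = 1) : A ∈ D (m + 1) :=
  (mem_children.1 (children_eq_singleton hp hA h ▸ Finset.mem_singleton_self A)).1

theorem disjoint_children (hp : IsPartitionSeq D) (hA : A ∈ D m) (hB : B ∈ D m) (hAB : A ≠ B) :
    Disjoint (children D m A) (children D m B) := by
  refine Finset.disjoint_left.2 fun C hCA hCB => hAB ?_
  obtain ⟨w, hw⟩ := hp.2.1 _ C (mem_children.1 hCA).1
  exact hp.eq_of_mem hA hB ((mem_children.1 hCA).2 hw) ((mem_children.1 hCB).2 hw)

theorem filter_subset_succ_eq_biUnion (hp : IsPartitionSeq D) (hnm : n ≤ m) (hA : A ∈ D n) :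
    (D (m + 1)).filter (· ⊆ A) = ((D m).filter (· ⊆ A)).biUnion (children D m) := by
  ext C
  simp only [Finset.mem_filter, Finset.mem_biUnion, mem_children]
  constructor
  · rintro ⟨hC, hCA⟩
    obtain ⟨B, hB, hCB⟩ := hp.2.2.2.2 m C hC
    obtain ⟨w, hw⟩ := hp.2.1 _ C hC
    exact ⟨B, ⟨hB, hp.subset_of_mem hnm hA hB (hCA hw) (hCB hw)⟩, hC, hCB⟩
  · rintro ⟨B, ⟨-, hBA⟩, hC, hCB⟩
    exact ⟨hC, hCB.trans hBA⟩

theorem filter_subset_self_eq (hp : IsPartitionSeq D) (hA : A ∈ D n) :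
    (D n).filter (· ⊆ A) = {A} := by
  ext B
  simp only [Finset.mem_filter, Finset.mem_singleton]
  refine ⟨fun ⟨hB, hBA⟩ => ?_, by rintro rfl; exact ⟨hA, subset_rfl⟩⟩
  obtain ⟨w, hw⟩ := hp.2.1 n B hB
  exact hp.eq_of_mem hB hA hw (hBA hw)

theorem sum_children_measure {P : Measure Ω} [IsFiniteMeasure P] (hp : IsPartitionSeq D)
    (hA : A ∈ D m) : ∑ B ∈ children D m A, (P B).toReal = (P A).toReal := by
  rw [← ENNReal.toReal_sum fun B _ => measure_ne_top P B,
    ← measure_biUnion_finset (f := fun B => B)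
      (fun B hB C hC hBC => hp.2.2.1 _ (mem_children.1 hB).1 (mem_children.1 hC).1 hBC)
      (fun B hB => hp.1 _ B (mem_children.1 hB).1), biUnion_children hp hA]

end Atoms

section Values
variable [MeasurableSpace Ω] {P : Measure Ω} {D : ℕ → Finset (Set Ω)} {f g h : ℕ → Set Ω → ℝ}
  {m n : ℕ} {A B : Set Ω}

def smallestChild (P : Measure Ω) (D : ℕ → Finset (Set Ω)) (m : ℕ) (A : Set Ω) : Set Ω :=
  if hne : (children D m A).Nonempty then (Finset.exists_min_image _ (fun B => P B) hne).choose
  else ∅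

theorem smallestChild_spec (hp : IsPartitionSeq D) (hA : A ∈ D m) :
    smallestChild P D m A ∈ children D m A ∧
      ∀ B ∈ children D m A, P (smallestChild P D m A) ≤ P B := by
  have hne := children_nonempty hp hA
  rw [smallestChild, dif_pos hne]
  exact (Finset.exists_min_image _ (fun B => P B) hne).choose_spec

theorem smallestChild_eq_self (hp : IsPartitionSeq D) (hA : A ∈ D m)
    (h : (children D m A).card = 1) : smallestChild P D m A = A := by
  simpa [children_eq_singleton hp hA h] using (smallestChild_spec (P := P) hp hA).1

theorem two_mul_measure_smallestChild_le [IsFiniteMeasure P] (hp : IsPartitionSeq D)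
    (hA : A ∈ D m) (h : (children D m A).card ≠ 1) :
    2 * (P (smallestChild P D m A)).toReal ≤ (P A).toReal := by
  obtain ⟨hc, hmin⟩ := smallestChild_spec (P := P) hp hA
  have hcard : 1 < (children D m A).card := by
    have := (children_nonempty hp hA).card_pos
    omega
  obtain ⟨B, hB, hBc⟩ := Finset.exists_mem_ne hcard (smallestChild P D m A)
  have hpair : ∑ C ∈ {smallestChild P D m A, B}, (P C).toReal ≤ (P A).toReal :=
    sum_children_measure (P := P) hp hA ▸ Finset.sum_le_sum_of_subset_of_nonneg
      (Finset.insert_subset hc (Finset.singleton_subset_iff.2 hB)) fun _ _ _ => by positivity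
  rw [Finset.sum_pair hBc.symm] at hpair
  linarith [ENNReal.toReal_mono (measure_ne_top P B) (hmin B hB)]

theorem mval_eq_of_mem (hp : IsPartitionSeq D) (hA : A ∈ D n) {w : Ω} (hw : w ∈ A) :
    mval D f n w = f n A := by
  rw [mval, Finset.sum_eq_single_of_mem A hA fun B hB hBA => ?_]
  · exact indicator_of_mem hw _
  · exact indicator_of_notMem (fun hwB => hBA (hp.eq_of_mem hB hA hwB hw)) _

theorem measurable_mval (hp : IsPartitionSeq D) : Measurable (mval D f n) :=
  Finset.measurable_sum _ fun A hA => measurable_const.indicator (hp.1 n A hA)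

theorem lpNorm_top_le (hp : IsPartitionSeq D) {C : ℝ} (hC : ∀ A ∈ D n, |f n A| ≤ C) :
    lpNorm P D ∞ f n ≤ ENNReal.ofReal C := by
  refine eLpNormEssSup_le_of_ae_bound (Eventually.of_forall fun w => ?_)
  obtain ⟨A, hA, hw⟩ := hp.exists_mem n w
  rw [Real.norm_eq_abs, mval_eq_of_mem hp hA hw]
  exact hC A hA

theorem ofReal_abs_le_lpNorm_top (hp : IsPartitionSeq D) (hPA : 0 < P A) (hA : A ∈ D n) :
    ENNReal.ofReal |f n A| ≤ lpNorm P D ∞ f n := by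
  obtain ⟨w, hwA, hw⟩ : ∃ w ∈ A, ‖mval D f n w‖ₑ ≤ lpNorm P D ∞ f n :=
    Measure.exists_mem_of_measure_ne_zero_of_ae hPA.ne' (ae_restrict_of_ae ae_le_eLpNormEssSup)
  rwa [mval_eq_of_mem hp hA hwA, Real.enorm_eq_ofReal_abs] at hw

theorem lpNorm_sub_le (hp : IsPartitionSeq D) {p : ℝ≥0∞} (hp1 : 1 ≤ p) :
    lpNorm P D p (h - f) n ≤ lpNorm P D p (h - g) n + lpNorm P D p (g - f) n := by
  have hsplit : mval D (h - f) n = mval D (h - g) n + mval D (g - f) n := by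
    simp only [mval_sub]; abel
  rw [lpNorm, hsplit]
  exact eLpNorm_add_le (measurable_mval hp).aestronglyMeasurable
    (measurable_mval hp).aestronglyMeasurable hp1

theorem MartBall.abs_le_one (hp : IsPartitionSeq D) (hpos : ∀ n, ∀ A ∈ D n, 0 < P A)
    (f : MartBall P D ∞) (n : ℕ) (A : Set Ω) : |f.1 n A| ≤ 1 := by
  by_cases hA : A ∈ D n
  · refine ENNReal.ofReal_le_one.1 ((ofReal_abs_le_lpNorm_top hp (hpos n A hA) hA).trans ?_)
    exact (le_iSup (lpNorm P D ∞ f.1) n).trans f.2.2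
  · simp [f.2.1.1 n A hA]

theorem setIntegral_mval [IsFiniteMeasure P] (hp : IsPartitionSeq D) (hnm : n ≤ m)
    (hA : A ∈ D n) :
    ∫ w in A, mval D f m w ∂P = ∑ B ∈ (D m).filter (· ⊆ A), f m B * (P B).toReal := by
  have hterm : ∀ B ∈ D m, ∫ w in A, B.indicator (fun _ => f m B) w ∂P =
      if B ⊆ A then f m B * (P B).toReal else 0 := by
    intro B hB
    rw [setIntegral_indicator (hp.1 m B hB), setIntegral_const, smul_eq_mul, mul_comm,
      measureReal_def]
    split_ifs with hBA
    · rw [inter_eq_right.2 hBA]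
    · suffices A ∩ B = ∅ by simp [this]
      refine eq_empty_of_forall_notMem fun w ⟨hwA, hwB⟩ => hBA ?_
      exact hp.subset_of_mem hnm hA hB hwA hwB
  unfold mval
  rw [integral_finsetSum _ fun B hB => (integrable_const _).indicator (hp.1 m B hB),
    Finset.sum_congr rfl hterm, Finset.sum_filter]

theorem isMart_iff [IsFiniteMeasure P] (hp : IsPartitionSeq D) :
    IsMart P D f ↔ (∀ n, ∀ A, A ∉ D n → f n A = 0) ∧
      ∀ n, ∀ A ∈ D n, f n A * (P A).toReal = ∑ B ∈ children D n A, f (n + 1) B * (P B).toReal := by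
  refine and_congr_right fun _ => ⟨fun hM n A hA => ?_, fun hstep n m hnm A hA => ?_⟩
  · have := hM n (n + 1) n.le_succ A hA
    rwa [setIntegral_mval hp le_rfl hA, setIntegral_mval hp n.le_succ hA,
      filter_subset_self_eq hp hA, Finset.sum_singleton, filter_subset_succ_eq_biUnion hp le_rfl hA,
      filter_subset_self_eq hp hA, Finset.singleton_biUnion] at this
  · rw [setIntegral_mval hp le_rfl hA, setIntegral_mval hp hnm hA, filter_subset_self_eq hp hA,
      Finset.sum_singleton]
    induction m, hnm using Nat.le_induction with
    | base => rw [filter_subset_self_eq hp hA, Finset.sum_singleton]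
    | succ m hnm ih =>
      rw [ih, filter_subset_succ_eq_biUnion hp hnm hA, Finset.sum_biUnion]
      · exact Finset.sum_congr rfl fun B hB => hstep m B (Finset.mem_filter.1 hB).1
      · intro B hB C hC hBC
        exact disjoint_children hp (Finset.mem_filter.1 hB).1 (Finset.mem_filter.1 hC).1 hBC

end Values

section MartBallTopology
variable [MeasurableSpace Ω] {P : Measure Ω} {D : ℕ → Finset (Set Ω)} {n : ℕ} {ε : ℝ≥0∞}

theorem exists_pos_lpNorm_top_lt (hp : IsPartitionSeq D) {g₀ f : ℕ → Set Ω → ℝ}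
    (hd : lpNorm P D ∞ (g₀ - f) n < ε) :
    ∃ η > 0, ∀ g : ℕ → Set Ω → ℝ, (∀ A ∈ D n, |g n A - g₀ n A| ≤ η) →
      lpNorm P D ∞ (g - f) n < ε := by
  obtain ⟨r, hr0, hr⟩ := ENNReal.lt_iff_exists_add_pos_lt.1 hd
  refine ⟨r, hr0, fun g hg => ?_⟩
  calc lpNorm P D ∞ (g - f) n ≤ lpNorm P D ∞ (g - g₀) n + lpNorm P D ∞ (g₀ - f) n :=
        lpNorm_sub_le hp le_top
    _ ≤ r + lpNorm P D ∞ (g₀ - f) n := by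
        gcongr
        simpa using lpNorm_top_le (P := P) (f := g - g₀) hp hg
    _ < ε := by rwa [add_comm]

theorem lpNorm_zero {p : ℝ≥0∞} : lpNorm P D p 0 n = 0 := by
  have : mval D 0 n = 0 := by ext; simp [mval]
  simp [lpNorm, this]

theorem isOpen_lpNorm_lt (f : MartBall P D ∞) (n : ℕ) (hε : 0 < ε) :
    IsOpen {g : MartBall P D ∞ | lpNorm P D ∞ (g.1 - f.1) n < ε} :=
  TopologicalSpace.isOpen_generateFrom_of_mem ⟨f, n, ε, hε, rfl⟩

theorem continuous_martBall_apply (hp : IsPartitionSeq D) (hpos : ∀ n, ∀ A ∈ D n, 0 < P A)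
    (n : ℕ) (A : Set Ω) : Continuous fun g : MartBall P D ∞ => g.1 n A := by
  by_cases hA : A ∈ D n
  · refine Metric.continuous_iff'.2 fun g₀ ε hε => ?_
    refine Filter.mem_of_superset ((isOpen_lpNorm_lt g₀ n (ENNReal.ofReal_pos.2 hε)).mem_nhds
      (by simp [lpNorm_zero, hε])) fun g hg => ?_
    have := (ofReal_abs_le_lpNorm_top (f := g.1 - g₀.1) hp (hpos n A hA) hA).trans_lt hg
    rwa [ENNReal.ofReal_lt_ofReal_iff hε] at this
  · exact continuous_const.congr fun g => (g.2.1.1 n A hA).symm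

theorem exists_forall_close_mem (hp : IsPartitionSeq D) {U : Set (MartBall P D ∞)}
    (hU : IsOpen U) {g₀ : MartBall P D ∞} (hg₀ : g₀ ∈ U) :
    ∃ N, ∃ η > 0, ∀ g : MartBall P D ∞,
      (∀ k ≤ N, ∀ A ∈ D k, |g.1 k A - g₀.1 k A| ≤ η) → g ∈ U := by
  induction hU with
  | basic s hs =>
    obtain ⟨f, n, ε, -, rfl⟩ := hs
    obtain ⟨η, hη, h⟩ := exists_pos_lpNorm_top_lt hp hg₀
    exact ⟨n, η, hη, fun g hg => h g.1 (hg n le_rfl)⟩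
  | univ => exact ⟨0, 1, one_pos, fun _ _ => mem_univ _⟩
  | inter s t _ _ ihs iht =>
    obtain ⟨N₁, η₁, hη₁, h₁⟩ := ihs hg₀.1
    obtain ⟨N₂, η₂, hη₂, h₂⟩ := iht hg₀.2
    refine ⟨max N₁ N₂, min η₁ η₂, lt_min hη₁ hη₂, fun g hg => ⟨h₁ g fun k hk A hA => ?_,
      h₂ g fun k hk A hA => ?_⟩⟩
    · exact (hg k (hk.trans (le_max_left _ _)) A hA).trans (min_le_left _ _)
    · exact (hg k (hk.trans (le_max_right _ _)) A hA).trans (min_le_right _ _)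
  | sUnion S _ ih =>
    obtain ⟨t, htS, hgt⟩ := hg₀
    obtain ⟨N, η, hη, h⟩ := ih t htS hgt
    exact ⟨N, η, hη, fun g hg => ⟨t, htS, h g hg⟩⟩

end MartBallTopology

section KTopology
variable {D : ℕ → Finset (Set Ω)}

instance : CompactSpace (Kt D) := by
  refine isCompact_iff_compactSpace.1 ((isCompact_univ_pi fun n =>
    (D n).finite_toSet.isCompact).of_isClosed_subset ?_ fun x hx n _ => hx.1 n)
  show IsClosed {x : ℕ → Set Ω | (∀ n, x n ∈ D n) ∧ ∀ n m, n ≤ m → x m ⊆ x n}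
  convert (isClosed_iInter fun n => (isClosed_discrete (D n : Set (Set Ω))).preimage
    (continuous_apply n)).inter
    (isClosed_iInter fun n => isClosed_iInter fun m => isClosed_iInter fun (_ : n ≤ m) =>
      (isClosed_discrete {p : Set Ω × Set Ω | p.1 ⊆ p.2}).preimage
        ((continuous_apply m).prodMk (continuous_apply n))) using 1
  ext x
  simp

theorem continuous_kt_apply (n : ℕ) : Continuous fun x : Kt D => x.1 n :=
  (continuous_apply n).comp continuous_subtype_val

theorem exists_forall_apply_eq_mem [MeasurableSpace Ω] (hp : IsPartitionSeq D) {U : Set (Kt D)}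
    (hU : IsOpen U) {x₀ : Kt D} (hx₀ : x₀ ∈ U) : ∃ N, ∀ x : Kt D, x.1 N = x₀.1 N → x ∈ U := by
  obtain ⟨V, hV, rfl⟩ := isOpen_induced_iff.1 hU
  obtain ⟨I, u, hIu, hsub⟩ := isOpen_pi_iff.1 hV x₀.1 hx₀
  refine ⟨I.sup id, fun x hx => hsub fun i hi => ?_⟩
  have hi' : i ≤ I.sup id := Finset.le_sup (f := id) hi
  obtain ⟨w, hw⟩ := hp.2.1 _ _ (x.2.1 (I.sup id))
  have hxi : x.1 i = x₀.1 i := hp.eq_of_mem (x.2.1 i) (x₀.2.1 i) (x.2.2 i _ hi' hw)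
    (x₀.2.2 i _ hi' (hx ▸ hw))
  exact hxi ▸ (hIu i hi).2

end KTopology

section Oscillation

def cutoff (k : ℕ) : ℝ := 1 - (1 / 2) ^ k

theorem cutoff_lt_one (k : ℕ) : cutoff k < 1 := by
  have : (0 : ℝ) < (1 / 2) ^ k := by positivity
  rw [cutoff]; linarith

theorem tendsto_cutoff : Tendsto cutoff atTop (𝓝 1) := by
  have h := (tendsto_const_nhds (x := (1 : ℝ))).sub
    (tendsto_pow_atTop_nhds_zero_of_lt_one (by norm_num : (0 : ℝ) ≤ 1 / 2) (by norm_num))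
  rw [sub_zero] at h
  exact h

theorem limsup_coe_eq_one_iff {a : ℕ → ℝ} (ha : ∀ m, a m ≤ 1) :
    limsup (fun m => (a m : EReal)) atTop = 1 ↔ ∀ k, ∃ᶠ m in atTop, cutoff k < a m := by
  refine ⟨fun h k => ?_, fun h => ?_⟩
  · have : ((cutoff k : ℝ) : EReal) < limsup (fun m => (a m : EReal)) atTop := by
      rw [h]; exact_mod_cast cutoff_lt_one k
    exact (frequently_lt_of_lt_limsup (by isBoundedDefault) this).mono
      fun m hm => EReal.coe_lt_coe_iff.1 hm
  · refine le_antisymm (limsup_le_of_le (by isBoundedDefault)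
      (Eventually.of_forall fun m => by exact_mod_cast ha m)) ?_
    refine EReal.ge_of_forall_gt_iff_ge.1 fun z hz => ?_
    obtain ⟨k, hk⟩ := (tendsto_cutoff.eventually
      (lt_mem_nhds (by exact_mod_cast hz : z < 1))).exists
    exact le_limsup_of_frequently_le ((h k).mono fun m hm => EReal.coe_le_coe_iff.2
      (hk.trans hm).le) (by isBoundedDefault)

theorem liminf_coe_eq_neg_one_iff {a : ℕ → ℝ} (ha : ∀ m, -1 ≤ a m) :
    liminf (fun m => (a m : EReal)) atTop = -1 ↔ ∀ k, ∃ᶠ m in atTop, cutoff k < -a m := by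
  have hneg : (fun m => (a m : EReal)) = -fun m => ((-a m : ℝ) : EReal) := by
    ext m; simp
  rw [hneg, EReal.liminf_neg, neg_inj, limsup_coe_eq_one_iff fun m => by linarith [ha m]]

variable {D : ℕ → Finset (Set Ω)} {f : ℕ → Set Ω → ℝ}

def FrequentlyNearOne (f : ℕ → Set Ω → ℝ) (x : Kt D) : Prop :=
  ∀ k, ∃ᶠ m in atTop, cutoff k < f m (x.1 m)

theorem oscFullAt_iff {x : Kt D} (hf : ∀ m, |f m (x.1 m)| ≤ 1) :
    OscFullAt D f x ↔ FrequentlyNearOne f x ∧ FrequentlyNearOne (-f) x :=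
  and_congr (limsup_coe_eq_one_iff fun m => (abs_le.1 (hf m)).2)
    (liminf_coe_eq_neg_one_iff fun m => (abs_le.1 (hf m)).1)

def NearOneBelowAtoms (D : ℕ → Finset (Set Ω)) (f : ℕ → Set Ω → ℝ) : Prop :=
  ∀ n, ∀ A ∈ D n, ∀ k, ∃ m ≥ n, ∃ B ∈ D m, B ⊆ A ∧ cutoff k < f m B

def OscillatesBelowAtoms (D : ℕ → Finset (Set Ω)) (f : ℕ → Set Ω → ℝ) : Prop :=
  NearOneBelowAtoms D f ∧ NearOneBelowAtoms D (-f)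

theorem setOf_forall_frequently_eq {X : Type*} (p : ℕ → ℕ → X → Prop) :
    {x | ∀ k, ∃ᶠ m in atTop, p k m x} = ⋂ kl : ℕ × ℕ, {x | ∃ m ≥ kl.2, p kl.1 m x} := by
  ext x
  simp [frequently_atTop]

variable {X : Type*} [TopologicalSpace X]

theorem isOpen_setOf_exists_ge_lt {u : ℕ → X → ℝ} (hu : ∀ m, Continuous (u m)) (l : ℕ)
    (c : ℝ) : IsOpen {x | ∃ m ≥ l, c < u m x} := by
  refine isOpen_iff_forall_mem_open.2 fun x ⟨m, hm, hx⟩ => ⟨{y | c < u m y},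
    fun y hy => ⟨m, hm, hy⟩, isOpen_lt continuous_const (hu m), hx⟩

theorem isGδ_setOf_forall_frequently {u : ℕ → X → ℝ} (hu : ∀ m, Continuous (u m)) :
    IsGδ {x | ∀ k, ∃ᶠ m in atTop, cutoff k < u m x} := by
  rw [setOf_forall_frequently_eq]
  exact IsGδ.iInter fun kl => (isOpen_setOf_exists_ge_lt hu kl.2 _).isGδ

theorem dense_setOf_forall_frequently [BaireSpace X] {u : ℕ → X → ℝ}
    (hu : ∀ m, Continuous (u m)) (hd : ∀ k l, Dense {x | ∃ m ≥ l, cutoff k < u m x}) :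
    Dense {x | ∀ k, ∃ᶠ m in atTop, cutoff k < u m x} := by
  rw [setOf_forall_frequently_eq]
  exact dense_iInter_of_isOpen (fun kl => isOpen_setOf_exists_ge_lt hu kl.2 _)
    fun kl => hd kl.1 kl.2

theorem isGδ_setOf_nearOneBelowAtoms {u : X → ℕ → Set Ω → ℝ}
    (hu : ∀ m B, Continuous fun x => u x m B) : IsGδ {x | NearOneBelowAtoms D (u x)} := by
  have : {x | NearOneBelowAtoms D (u x)} = ⋂ n, ⋂ A ∈ (D n : Set (Set Ω)), ⋂ k,
      {x | ∃ m ≥ n, ∃ B ∈ D m, B ⊆ A ∧ cutoff k < u x m B} := by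
    ext x
    simp [NearOneBelowAtoms]
  rw [this]
  refine IsGδ.iInter fun n => IsGδ.biInter (D n).countable_toSet fun A _ => IsGδ.iInter fun k =>
    (isOpen_iff_forall_mem_open.2 fun x hx => ?_).isGδ
  obtain ⟨m, hm, B, hB, hBA, hx⟩ := hx
  exact ⟨{y | cutoff k < u y m B}, fun y hy => ⟨m, hm, B, hB, hBA, hy⟩,
    isOpen_lt continuous_const (hu m B), hx⟩

theorem continuous_apply_kt_apply (f : ℕ → Set Ω → ℝ) (m : ℕ) :
    Continuous fun x : Kt D => f m (x.1 m) :=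
  continuous_of_discreteTopology.comp (continuous_kt_apply m)

theorem dense_setOf_frequentlyNearOne [MeasurableSpace Ω] (hp : IsPartitionSeq D)
    (hf : NearOneBelowAtoms D f) : Dense {x : Kt D | FrequentlyNearOne f x} := by
  refine dense_setOf_forall_frequently (continuous_apply_kt_apply f) fun k l => ?_
  refine dense_iff_inter_open.2 fun U hU ⟨x₀, hx₀⟩ => ?_
  obtain ⟨N, hN⟩ := exists_forall_apply_eq_mem hp hU hx₀
  obtain ⟨m, hm, B, hB, hBA, hfB⟩ := hf (max N l) _ (x₀.2.1 _) k
  obtain ⟨w, hw⟩ := hp.2.1 m B hB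
  refine ⟨chainOf hp w, hN _ (chainOf_apply hp (x₀.2.1 N) ?_), m, le_of_max_le_right hm, ?_⟩
  · exact x₀.2.2 N _ (le_max_left N l) (hBA hw)
  · rwa [chainOf_apply hp hB hw]

end Oscillation

theorem exists_eq_iterate_of_stutter {α : Type*} {F : α → α} {t : ℕ → α} {p : ℕ → Prop}
    (hp : ∀ i, ∃ j ≥ i, p j) (hmove : ∀ i, p i → t (i + 1) = F (t i))
    (hstay : ∀ i, ¬ p i → t (i + 1) = t i) (n : ℕ) : ∃ i, t i = F^[n] (t 0) := by
  have hnext : ∀ i, ∃ j, t j = F (t i) := by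
    intro i
    have hex : ∃ d, p (i + d) := by
      obtain ⟨j, hj, hpj⟩ := hp i
      exact ⟨j - i, by rwa [Nat.add_sub_cancel' hj]⟩
    have hconst : ∀ e ≤ Nat.find hex, t (i + e) = t i := by
      intro e he
      induction e with
      | zero => rfl
      | succ e ih => rw [← add_assoc, hstay _ (Nat.find_min hex (by omega)), ih (by omega)]
    exact ⟨i + Nat.find hex + 1, by rw [hmove _ (Nat.find_spec hex), hconst _ le_rfl]⟩
  induction n with
  | zero => exact ⟨0, rfl⟩
  | succ n ih =>
    obtain ⟨i, hi⟩ := ih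
    obtain ⟨j, hj⟩ := hnext i
    exact ⟨j, by rw [hj, hi, Function.iterate_succ_apply']⟩

section PhaseDynamics
variable {θ r : ℝ} {s : ℝ × ℕ}

def margin (θ : ℝ) (j : ℕ) : ℝ := θ * (1 / 2) ^ j

theorem margin_succ (θ : ℝ) (j : ℕ) : margin θ (j + 1) = margin θ j / 2 := by
  rw [margin, margin, pow_succ]; ring

theorem margin_nonneg (hθ : 0 ≤ θ) (j : ℕ) : 0 ≤ margin θ j := by
  unfold margin; positivity

theorem margin_pos (hθ : 0 < θ) (j : ℕ) : 0 < margin θ j := by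
  unfold margin; positivity

theorem cutoff_le_one_sub_margin (hθ : θ ≤ 1) {k j : ℕ} (hkj : k ≤ j) :
    cutoff k ≤ 1 - margin θ j := by
  have h1 : margin θ j ≤ (1 / 2) ^ j := mul_le_of_le_one_left (by positivity) hθ
  have h2 : ((1 : ℝ) / 2) ^ j ≤ (1 / 2) ^ k := pow_le_pow_of_le_one (by norm_num) (by norm_num) hkj
  rw [cutoff]; linarith

/-- In the state `(v, j)` the value `v` is being pushed towards `(-1) ^ j`; the phase `j` ends,
and the direction flips, once `v` comes within `margin θ j` of `(-1) ^ j`. -/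
def chosenStep (θ : ℝ) (s : ℝ × ℕ) : ℝ × ℕ :=
  (s.1 + (-1) ^ s.2 * margin θ (s.2 + 1),
    if 1 - margin θ s.2 < (-1) ^ s.2 * s.1 + margin θ (s.2 + 1) then s.2 + 1 else s.2)

def otherStep (θ r : ℝ) (s : ℝ × ℕ) : ℝ × ℕ :=
  (s.1 - (-1) ^ s.2 * margin θ (s.2 + 1) * r, s.2 + 2)

def InBand (θ : ℝ) (s : ℝ × ℕ) : Prop := |s.1| ≤ 1 - margin θ s.2

theorem neg_one_pow_mul_self (j : ℕ) : (-1 : ℝ) ^ j * (-1) ^ j = 1 := by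
  rw [← mul_pow]; norm_num

theorem abs_neg_one_pow_mul (j : ℕ) (x : ℝ) : |(-1 : ℝ) ^ j * x| = |x| := by
  rw [abs_mul, abs_neg_one_pow, one_mul]

theorem InBand.abs_le_one (hθ : 0 ≤ θ) (hs : InBand θ s) : |s.1| ≤ 1 :=
  hs.trans (by linarith [margin_nonneg hθ s.2])

theorem neg_one_pow_mul_chosenStep_fst (θ : ℝ) (s : ℝ × ℕ) :
    (-1) ^ s.2 * (chosenStep θ s).1 = (-1) ^ s.2 * s.1 + margin θ (s.2 + 1) := by
  simp only [chosenStep]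
  linear_combination margin θ (s.2 + 1) * neg_one_pow_mul_self s.2

theorem inBand_chosenStep (hθ : 0 ≤ θ) (hs : InBand θ s) : InBand θ (chosenStep θ s) := by
  have hw : |(-1) ^ s.2 * s.1| ≤ 1 - margin θ s.2 := by rwa [abs_neg_one_pow_mul]
  rw [abs_le] at hw
  have hm := margin_succ θ s.2
  have hδ := margin_nonneg hθ (s.2 + 1)
  unfold InBand
  rw [← abs_neg_one_pow_mul s.2, neg_one_pow_mul_chosenStep_fst, abs_le]
  simp only [chosenStep]
  split_ifs with h <;> constructor <;> linarith

theorem inBand_otherStep (hθ : 0 ≤ θ) (hr₀ : 0 ≤ r) (hr₁ : r ≤ 1) (hs : InBand θ s) :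
    InBand θ (otherStep θ r s) := by
  have hw : |(-1) ^ s.2 * s.1| ≤ 1 - margin θ s.2 := by rwa [abs_neg_one_pow_mul]
  rw [abs_le] at hw
  have hm : margin θ (s.2 + 2) = margin θ s.2 / 4 := by
    rw [margin_succ, margin_succ]; ring
  have hδ := margin_succ θ s.2
  have hδr₀ : 0 ≤ margin θ (s.2 + 1) * r := mul_nonneg (margin_nonneg hθ _) hr₀
  have hδr₁ : margin θ (s.2 + 1) * r ≤ margin θ (s.2 + 1) :=
    mul_le_of_le_one_right (margin_nonneg hθ _) hr₁
  unfold InBand otherStep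
  rw [← abs_neg_one_pow_mul s.2, abs_le]
  have : (-1) ^ s.2 * (s.1 - (-1) ^ s.2 * margin θ (s.2 + 1) * r) =
      (-1) ^ s.2 * s.1 - margin θ (s.2 + 1) * r := by
    linear_combination -(margin θ (s.2 + 1) * r) * neg_one_pow_mul_self s.2
  rw [this]
  constructor <;> linarith

theorem chosenStep_snd_of_ne (h : (chosenStep θ s).2 ≠ s.2 + 1) : (chosenStep θ s).2 = s.2 := by
  simp only [chosenStep] at h ⊢
  split_ifs at h ⊢ <;> simp_all

theorem one_sub_margin_lt_of_chosenStep_snd (h : (chosenStep θ s).2 = s.2 + 1) :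
    1 - margin θ s.2 < (-1) ^ s.2 * (chosenStep θ s).1 := by
  rw [neg_one_pow_mul_chosenStep_fst]
  simp only [chosenStep] at h
  split_ifs at h with hc
  · exact hc
  · omega

theorem inBand_iterate_chosenStep (hθ : 0 ≤ θ) (hs : InBand θ s) (n : ℕ) :
    InBand θ ((chosenStep θ)^[n] s) := by
  induction n with
  | zero => exact hs
  | succ n ih => rw [Function.iterate_succ_apply']; exact inBand_chosenStep hθ ih

/-- Each step of a phase moves the value by the fixed amount `margin θ (j + 1)`, so every phase
ends. -/
theorem exists_iterate_chosenStep_phase_end (hθ : 0 < θ) (hs : InBand θ s) :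
    ∃ n, ((chosenStep θ)^[n] s).2 = s.2 ∧ (chosenStep θ ((chosenStep θ)^[n] s)).2 = s.2 + 1 := by
  by_contra! h
  have hstay : ∀ n : ℕ, ((chosenStep θ)^[n] s).2 = s.2 ∧
      (-1) ^ s.2 * ((chosenStep θ)^[n] s).1 = (-1) ^ s.2 * s.1 + n * margin θ (s.2 + 1) := by
    intro n
    induction n with
    | zero => simp
    | succ n ih =>
      obtain ⟨h₂, h₁⟩ := ih
      set t := (chosenStep θ)^[n] s
      have ht := chosenStep_snd_of_ne (s := t) (by rw [h₂]; exact h n h₂)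
      rw [Function.iterate_succ_apply']
      refine ⟨ht.trans h₂, ?_⟩
      calc (-1) ^ s.2 * (chosenStep θ t).1 = (-1) ^ t.2 * (chosenStep θ t).1 := by rw [h₂]
        _ = (-1) ^ t.2 * t.1 + margin θ (t.2 + 1) := neg_one_pow_mul_chosenStep_fst θ t
        _ = _ := by rw [h₂, h₁]; push_cast; ring
  have hδ := margin_pos hθ (s.2 + 1)
  obtain ⟨n, hn⟩ := exists_nat_gt (2 / margin θ (s.2 + 1))
  have hbound (x : ℝ) (hx : |x| ≤ 1) : |(-1 : ℝ) ^ s.2 * x| ≤ 1 := by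
    rwa [abs_neg_one_pow_mul]
  have h₁ := (abs_le.1 (hbound _ ((inBand_iterate_chosenStep hθ.le hs n).abs_le_one hθ.le))).2
  have h₀ := (abs_le.1 (hbound _ (hs.abs_le_one hθ.le))).1
  rw [(hstay n).2] at h₁
  rw [div_lt_iff₀ hδ] at hn
  linarith

theorem exists_iterate_chosenStep_completes_phase (hθ : 0 < θ) (hs : InBand θ s) :
    ∃ n, 1 - margin θ s.2 < (-1) ^ s.2 * ((chosenStep θ)^[n] s).1 ∧
      ((chosenStep θ)^[n] s).2 = s.2 + 1 := by
  obtain ⟨n, h₁, h₂⟩ := exists_iterate_chosenStep_phase_end hθ hs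
  refine ⟨n + 1, ?_, ?_⟩ <;> rw [Function.iterate_succ_apply']
  · have := one_sub_margin_lt_of_chosenStep_snd (h₂.trans (by rw [h₁]))
    rwa [h₁] at this
  · exact h₂

theorem exists_iterate_chosenStep_gt (hθ : 0 < θ) (hs : InBand θ s) {J : ℕ} (hJ : s.2 ≤ J) :
    ∃ n, 1 - margin θ J < (-1) ^ J * ((chosenStep θ)^[n] s).1 ∧
      ((chosenStep θ)^[n] s).2 = J + 1 := by
  induction J, hJ using Nat.le_induction with
  | base => exact exists_iterate_chosenStep_completes_phase hθ hs
  | succ J _ ih =>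
    obtain ⟨n, -, hn⟩ := ih
    obtain ⟨n', h₁, h₂⟩ :=
      exists_iterate_chosenStep_completes_phase hθ (inBand_iterate_chosenStep hθ.le hs n)
    refine ⟨n' + n, ?_, ?_⟩ <;> rw [Function.iterate_add_apply]
    · rwa [hn] at h₁
    · rw [h₂, hn]

end PhaseDynamics

section Construction
variable [MeasurableSpace Ω] {P : Measure Ω} {D : ℕ → Finset (Set Ω)} {θ : ℝ}
  {g : ℕ → Set Ω → ℝ} {N L m n : ℕ} {A B : Set Ω}

def smallestChildOdds (P : Measure Ω) (D : ℕ → Finset (Set Ω)) (m : ℕ) (A : Set Ω) : ℝ :=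
  (P (smallestChild P D m A)).toReal / ((P A).toReal - (P (smallestChild P D m A)).toReal)

theorem smallestChildOdds_mem_Icc [IsFiniteMeasure P] (hp : IsPartitionSeq D)
    (hpos : ∀ n, ∀ A ∈ D n, 0 < P A) (hA : A ∈ D m) (h : (children D m A).card ≠ 1) :
    smallestChildOdds P D m A ∈ Icc 0 1 := by
  have hc := (mem_children.1 (smallestChild_spec (P := P) hp hA).1).1
  have hpc : 0 < (P (smallestChild P D m A)).toReal :=
    ENNReal.toReal_pos (hpos _ _ hc).ne' (measure_ne_top P _)
  have h2 := two_mul_measure_smallestChild_le (P := P) hp hA h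
  exact ⟨div_nonneg hpc.le (by linarith), (div_le_one (by linarith)).2 (by linarith)⟩

def childState (P : Measure Ω) (D : ℕ → Finset (Set Ω)) (θ : ℝ) (m : ℕ) (A B : Set Ω)
    (s : ℝ × ℕ) : ℝ × ℕ :=
  if (children D m A).card = 1 then s
  else if B = smallestChild P D m A then chosenStep θ s
  else otherStep θ (smallestChildOdds P D m A) s

theorem sum_childState [IsFiniteMeasure P] (hp : IsPartitionSeq D) (hA : A ∈ D m)
    (s : ℝ × ℕ) :
    ∑ B ∈ children D m A, (childState P D θ m A B s).1 * (P B).toReal = s.1 * (P A).toReal := by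
  unfold childState
  by_cases h : (children D m A).card = 1
  · simp [children_eq_singleton hp hA h]
  have hc := (smallestChild_spec (P := P) hp hA).1
  set c := smallestChild P D m A
  have hrest : ∑ B ∈ (children D m A).erase c, (P B).toReal = (P A).toReal - (P c).toReal := by
    rw [← sum_children_measure hp hA, ← Finset.add_sum_erase _ _ hc, add_sub_cancel_left]
  have hodds : smallestChildOdds P D m A * ((P A).toReal - (P c).toReal) = (P c).toReal := by
    rcases eq_or_ne ((P A).toReal - (P c).toReal) 0 with hz | hz
    · rw [hz, mul_zero]
      linarith [two_mul_measure_smallestChild_le (P := P) hp hA h, (P c).toReal_nonneg]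
    · exact div_mul_cancel₀ _ hz
  rw [← Finset.add_sum_erase _ _ hc, Finset.sum_congr rfl fun B hB => by
    rw [if_neg h, if_neg (Finset.ne_of_mem_erase hB)], ← Finset.mul_sum, hrest, if_neg h,
    if_pos rfl]
  simp only [chosenStep, otherStep]
  linear_combination -((-1) ^ s.2 * margin θ (s.2 + 1)) * hodds

def state (P : Measure Ω) (D : ℕ → Finset (Set Ω)) (θ : ℝ) (g : ℕ → Set Ω → ℝ) (N : ℕ) :
    ℕ → Set Ω → ℝ × ℕ
  | 0, A => ((1 - θ) * g 0 A, 0)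
  | m + 1, B =>
    if m < N then ((1 - θ) * g (m + 1) B, 0)
    else childState P D θ m (ancestor D m B) B (state P D θ g N m (ancestor D m B))

theorem state_of_le (h : m ≤ N) : state P D θ g N m A = ((1 - θ) * g m A, 0) := by
  cases m with
  | zero => rfl
  | succ m => exact if_pos (by omega)

theorem state_succ_of_le (h : N ≤ m) (B : Set Ω) :
    state P D θ g N (m + 1) B =
      childState P D θ m (ancestor D m B) B (state P D θ g N m (ancestor D m B)) :=
  if_neg (by omega)

theorem inBand_state [IsFiniteMeasure P] (hp : IsPartitionSeq D)
    (hpos : ∀ n, ∀ A ∈ D n, 0 < P A) (hθ₀ : 0 ≤ θ) (hθ₁ : θ ≤ 1) (hg : ∀ m A, |g m A| ≤ 1) :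
    ∀ m, ∀ A ∈ D m, InBand θ (state P D θ g N m A) := by
  have hinit : ∀ m A, m ≤ N → InBand θ (state P D θ g N m A) := by
    intro m A hm
    rw [state_of_le hm, InBand, abs_mul, abs_of_nonneg (sub_nonneg.2 hθ₁)]
    simpa [margin] using mul_le_of_le_one_right (sub_nonneg.2 hθ₁) (hg m A)
  intro m
  induction m with
  | zero => exact fun A _ => hinit 0 A (Nat.zero_le N)
  | succ m ih =>
    intro B hB
    by_cases hm : m < N
    · exact hinit _ B hm
    obtain ⟨A, hA, hBA⟩ := hp.2.2.2.2 m B hB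
    rw [state_succ_of_le (by omega), ancestor_eq hp (hp.2.1 _ B hB) hA hBA, childState]
    split_ifs with h
    · exact ih A hA
    · exact inBand_chosenStep hθ₀ (ih A hA)
    · obtain ⟨hr₀, hr₁⟩ := smallestChildOdds_mem_Icc hp hpos hA h
      exact inBand_otherStep hθ₀ hr₀ hr₁ (ih A hA)

def oscillatingMart (P : Measure Ω) (D : ℕ → Finset (Set Ω)) (θ : ℝ) (g : ℕ → Set Ω → ℝ)
    (N : ℕ) : ℕ → Set Ω → ℝ :=
  fun m A => if A ∈ D m then (state P D θ g N m A).1 else 0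

theorem oscillatingMart_of_mem (hA : A ∈ D m) :
    oscillatingMart P D θ g N m A = (state P D θ g N m A).1 :=
  if_pos hA

theorem isMart_oscillatingMart [IsFiniteMeasure P] (hp : IsPartitionSeq D) (hg : IsMart P D g) :
    IsMart P D (oscillatingMart P D θ g N) := by
  obtain ⟨-, hg⟩ := (isMart_iff hp).1 hg
  refine (isMart_iff hp).2 ⟨fun n A hA => if_neg hA, fun n A hA => ?_⟩
  have hchild : ∀ B ∈ children D n A, B ∈ D (n + 1) := fun B hB => (mem_children.1 hB).1
  rw [Finset.sum_congr rfl fun B hB => by rw [oscillatingMart_of_mem (hchild B hB)],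
    oscillatingMart_of_mem hA]
  by_cases hn : n < N
  · simp only [state_of_le hn.le, state_of_le (Nat.succ_le_of_lt hn), mul_assoc, hg n A hA,
      Finset.mul_sum]
  · rw [Finset.sum_congr rfl fun B hB => by
      rw [state_succ_of_le (by omega), ancestor_of_mem_children hp hA hB], sum_childState hp hA]

theorem abs_oscillatingMart_le_one [IsFiniteMeasure P] (hp : IsPartitionSeq D)
    (hpos : ∀ n, ∀ A ∈ D n, 0 < P A) (hθ₀ : 0 ≤ θ) (hθ₁ : θ ≤ 1) (hg : ∀ m A, |g m A| ≤ 1)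
    (m : ℕ) (A : Set Ω) : |oscillatingMart P D θ g N m A| ≤ 1 := by
  by_cases hA : A ∈ D m
  · rw [oscillatingMart_of_mem hA]
    exact (inBand_state hp hpos hθ₀ hθ₁ hg m A hA).abs_le_one hθ₀
  · simp [oscillatingMart, hA]

theorem abs_oscillatingMart_sub_le (hθ₀ : 0 ≤ θ) (hg : ∀ m A, |g m A| ≤ 1) (hm : m ≤ N)
    (hA : A ∈ D m) : |oscillatingMart P D θ g N m A - g m A| ≤ θ := by
  rw [oscillatingMart_of_mem hA, state_of_le hm, show (1 - θ) * g m A - g m A = -(θ * g m A) by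
    ring, abs_neg, abs_mul, abs_of_nonneg hθ₀]
  exact mul_le_of_le_one_right hθ₀ (hg m A)

def smallestChildPath (P : Measure Ω) (D : ℕ → Finset (Set Ω)) (L : ℕ) (A : Set Ω) :
    ℕ → Set Ω
  | 0 => A
  | i + 1 => smallestChild P D (L + i) (smallestChildPath P D L A i)

theorem smallestChildPath_mem (hp : IsPartitionSeq D) (hA : A ∈ D L) :
    ∀ i, smallestChildPath P D L A i ∈ D (L + i) ∧ smallestChildPath P D L A i ⊆ A
  | 0 => ⟨hA, subset_rfl⟩
  | i + 1 => by
    obtain ⟨hi, hiA⟩ := smallestChildPath_mem hp hA i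
    obtain ⟨hc, hcA⟩ := mem_children.1 (smallestChild_spec (P := P) hp hi).1
    exact ⟨hc, hcA.trans hiA⟩

theorem exists_splits_smallestChildPath (hp : IsPartitionSeq D)
    (hleave : ∀ n, ∀ A ∈ D n, ∃ m, n < m ∧ A ∉ D m) (hA : A ∈ D L) (i : ℕ) :
    ∃ j ≥ i, (children D (L + j) (smallestChildPath P D L A j)).card ≠ 1 := by
  by_contra! h
  have hconst : ∀ d, smallestChildPath P D L A (i + d) = smallestChildPath P D L A i ∧
      smallestChildPath P D L A i ∈ D (L + (i + d)) := by
    intro d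
    induction d with
    | zero => exact ⟨rfl, (smallestChildPath_mem hp hA i).1⟩
    | succ d ih =>
      have hd := h (i + d) (Nat.le_add_right i d)
      have hmem := (smallestChildPath_mem (P := P) hp hA (i + d)).1
      refine ⟨(smallestChild_eq_self hp hmem hd).trans ih.1, ?_⟩
      rw [← ih.1]
      exact mem_of_children_card_eq_one hp hmem hd
  obtain ⟨m, hm, hnot⟩ := hleave _ _ (smallestChildPath_mem (P := P) hp hA i).1
  have := (hconst (m - (L + i))).2
  rw [show L + (i + (m - (L + i))) = m by omega] at this
  exact hnot this

/-- Along the path of smallest children the states run through the orbit of `chosenStep`,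
repeating themselves where an atom does not split. -/
theorem exists_forall_exists_oscillatingMart_gt [IsFiniteMeasure P] (hp : IsPartitionSeq D)
    (hA : AssumptionA P D) (hθ₀ : 0 < θ) (hθ₁ : θ ≤ 1) (hg : ∀ m A, |g m A| ≤ 1)
    (hA₀ : A ∈ D n) : ∃ j₀, ∀ J ≥ j₀, ∃ m ≥ n, ∃ B ∈ D m, B ⊆ A ∧
      1 - margin θ J < (-1) ^ J * oscillatingMart P D θ g N m B := by
  obtain ⟨w, hw⟩ := hp.2.1 n A hA₀
  obtain ⟨C, hC, hwC⟩ := hp.exists_mem (n + N) w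
  have hCA : C ⊆ A := hp.subset_of_mem (Nat.le_add_right n N) hA₀ hC hw hwC
  have hmem := smallestChildPath_mem (P := P) hp hC
  set c := smallestChildPath P D (n + N) C
  set t : ℕ → ℝ × ℕ := fun i => state P D θ g N (n + N + i) (c i)
  have hstep : ∀ i, t (i + 1) = childState P D θ (n + N + i) (c i) (c (i + 1)) (t i) := by
    intro i
    have hchild : c (i + 1) ∈ children D (n + N + i) (c i) :=
      (smallestChild_spec (P := P) hp (hmem i).1).1
    simp only [t]
    rw [← add_assoc, state_succ_of_le (by omega), ancestor_of_mem_children hp (hmem i).1 hchild]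
  have hband : InBand θ (t 0) := inBand_state hp hA.1 hθ₀.le hθ₁ hg _ _ (hmem 0).1
  refine ⟨(t 0).2, fun J hJ => ?_⟩
  obtain ⟨k, hk, -⟩ := exists_iterate_chosenStep_gt hθ₀ hband hJ
  obtain ⟨i, hi⟩ := exists_eq_iterate_of_stutter (F := chosenStep θ) (t := t)
    (exists_splits_smallestChildPath (P := P) hp hA.2 hC)
    (fun i h => by rw [hstep, childState, if_neg h]; exact if_pos rfl)
    (fun i h => by rw [hstep, childState, if_pos (not_not.1 h)]) k
  refine ⟨n + N + i, by omega, c i, (hmem i).1, (hmem i).2.trans hCA, ?_⟩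
  rwa [oscillatingMart_of_mem (hmem i).1, show state P D θ g N (n + N + i) (c i) = t i from rfl,
    hi]

theorem oscillatesBelowAtoms_oscillatingMart [IsFiniteMeasure P] (hp : IsPartitionSeq D)
    (hA : AssumptionA P D) (hθ₀ : 0 < θ) (hθ₁ : θ ≤ 1) (hg : ∀ m A, |g m A| ≤ 1) :
    OscillatesBelowAtoms D (oscillatingMart P D θ g N) := by
  refine ⟨?_, ?_⟩ <;> intro n A hA₀ k <;>
    obtain ⟨j₀, h⟩ := exists_forall_exists_oscillatingMart_gt (N := N) hp hA hθ₀ hθ₁ hg hA₀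
  · obtain ⟨m, hm, B, hB, hBA, hgt⟩ := h (2 * (k + j₀)) (by omega)
    refine ⟨m, hm, B, hB, hBA,
      (cutoff_le_one_sub_margin (j := 2 * (k + j₀)) hθ₁ (by omega)).trans_lt ?_⟩
    rwa [(even_two_mul _).neg_one_pow, one_mul] at hgt
  · obtain ⟨m, hm, B, hB, hBA, hgt⟩ := h (2 * (k + j₀) + 1) (by omega)
    refine ⟨m, hm, B, hB, hBA,
      (cutoff_le_one_sub_margin (j := 2 * (k + j₀) + 1) hθ₁ (by omega)).trans_lt ?_⟩
    rwa [(odd_two_mul_add_one _).neg_one_pow, neg_one_mul] at hgt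

end Construction

section Assembly
variable [MeasurableSpace Ω] {P : Measure Ω} {D : ℕ → Finset (Set Ω)}

theorem exists_oscillatesBelowAtoms_close [IsFiniteMeasure P] (hp : IsPartitionSeq D)
    (hA : AssumptionA P D) (g₀ : MartBall P D ∞) (N : ℕ) {η : ℝ} (hη : 0 < η) :
    ∃ f : MartBall P D ∞, OscillatesBelowAtoms D f.1 ∧
      ∀ k ≤ N, ∀ A ∈ D k, |f.1 k A - g₀.1 k A| ≤ η := by
  have hθ₀ : 0 < min η 1 := lt_min hη one_pos
  have hg := MartBall.abs_le_one hp hA.1 g₀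
  have hbound := abs_oscillatingMart_le_one (N := N) hp hA.1 hθ₀.le (min_le_right η 1) hg
  refine ⟨⟨oscillatingMart P D (min η 1) g₀.1 N, isMart_oscillatingMart hp g₀.2.1, ?_⟩,
    oscillatesBelowAtoms_oscillatingMart hp hA hθ₀ (min_le_right η 1) hg,
    fun k hk A hA => (abs_oscillatingMart_sub_le hθ₀.le hg hk hA).trans (min_le_left η 1)⟩
  exact iSup_le fun n => (lpNorm_top_le hp fun A _ => hbound n A).trans ENNReal.ofReal_one.le

theorem dense_setOf_oscillatesBelowAtoms [IsFiniteMeasure P] (hp : IsPartitionSeq D)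
    (hA : AssumptionA P D) : Dense {f : MartBall P D ∞ | OscillatesBelowAtoms D f.1} := by
  refine dense_iff_inter_open.2 fun U hU ⟨g₀, hg₀⟩ => ?_
  obtain ⟨N, η, hη, hN⟩ := exists_forall_close_mem hp hU hg₀
  obtain ⟨f, hf, hclose⟩ := exists_oscillatesBelowAtoms_close hp hA g₀ N hη
  exact ⟨f, hN f hclose, hf⟩

theorem isGδ_setOf_oscillatesBelowAtoms (hp : IsPartitionSeq D)
    (hpos : ∀ n, ∀ A ∈ D n, 0 < P A) :
    IsGδ {f : MartBall P D ∞ | OscillatesBelowAtoms D f.1} :=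
  (isGδ_setOf_nearOneBelowAtoms (u := fun f : MartBall P D ∞ => f.1)
    (continuous_martBall_apply hp hpos)).inter
    (isGδ_setOf_nearOneBelowAtoms (u := fun f : MartBall P D ∞ => -f.1)
      fun m B => (continuous_martBall_apply hp hpos m B).neg)

theorem continuous_martBall_apply_kt_apply (hp : IsPartitionSeq D)
    (hpos : ∀ n, ∀ A ∈ D n, 0 < P A) (m : ℕ) :
    Continuous fun q : MartBall P D ∞ × Kt D => q.1.1 m (q.2.1 m) :=
  (continuous_prod_of_discrete_left (f := fun p : Set Ω × MartBall P D ∞ => p.2.1 m p.1)).2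
    (continuous_martBall_apply hp hpos m) |>.comp
    (((continuous_kt_apply m).comp continuous_snd).prodMk continuous_fst)

theorem setOf_oscFullAt_eq (hp : IsPartitionSeq D) (hpos : ∀ n, ∀ A ∈ D n, 0 < P A) :
    {q : MartBall P D ∞ × Kt D | OscFullAt D q.1.1 q.2} =
      {q | FrequentlyNearOne q.1.1 q.2} ∩ {q | FrequentlyNearOne (-q.1.1) q.2} := by
  ext q
  exact oscFullAt_iff fun m => MartBall.abs_le_one hp hpos q.1 m _

theorem isGδ_setOf_oscFullAt (hp : IsPartitionSeq D) (hpos : ∀ n, ∀ A ∈ D n, 0 < P A) :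
    IsGδ {q : MartBall P D ∞ × Kt D | OscFullAt D q.1.1 q.2} := by
  rw [setOf_oscFullAt_eq hp hpos]
  exact (isGδ_setOf_forall_frequently (continuous_martBall_apply_kt_apply hp hpos)).inter
    (isGδ_setOf_forall_frequently fun m => (continuous_martBall_apply_kt_apply hp hpos m).neg)

theorem dense_setOf_oscFullAt_of_oscillatesBelowAtoms (hp : IsPartitionSeq D)
    (hpos : ∀ n, ∀ A ∈ D n, 0 < P A) {f : MartBall P D ∞} (hf : OscillatesBelowAtoms D f.1) :
    Dense {x : Kt D | OscFullAt D f.1 x} := by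
  have : {x : Kt D | OscFullAt D f.1 x} =
      {x | FrequentlyNearOne f.1 x} ∩ {x | FrequentlyNearOne (-f.1) x} := by
    ext x
    exact oscFullAt_iff fun m => MartBall.abs_le_one hp hpos f m _
  rw [this]
  exact Dense.inter_of_Gδ (isGδ_setOf_forall_frequently (continuous_apply_kt_apply f.1))
    (isGδ_setOf_forall_frequently (continuous_apply_kt_apply (-f.1)))
    (dense_setOf_frequentlyNearOne hp hf.1) (dense_setOf_frequentlyNearOne hp hf.2)

theorem dense_setOf_oscFullAt [IsFiniteMeasure P] (hp : IsPartitionSeq D)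
    (hA : AssumptionA P D) : Dense {q : MartBall P D ∞ × Kt D | OscFullAt D q.1.1 q.2} := by
  refine dense_iff_inter_open.2 fun W hW ⟨⟨g₀, x₀⟩, hq⟩ => ?_
  obtain ⟨U, V, hU, hV, hg₀, hx₀, hUV⟩ := isOpen_prod_iff.1 hW g₀ x₀ hq
  obtain ⟨f, hfU, hf⟩ := (dense_setOf_oscillatesBelowAtoms hp hA).inter_open_nonempty U hU ⟨g₀, hg₀⟩
  obtain ⟨x, hxV, hx⟩ :=
    (dense_setOf_oscFullAt_of_oscillatesBelowAtoms hp hA.1 hf).inter_open_nonempty V hV ⟨x₀, hx₀⟩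
  exact ⟨(f, x), hUV ⟨hfU, hxV⟩, hx⟩

end Assembly

/-- Theorem (main:ip): the set of pairs `(f, x) ∈ M_{∞,1} × K` with `limsup f_n(x) = 1`
and `liminf f_n(x) = -1` is a dense `G_δ` subset of `M_{∞,1} × K` (with the topology of
pointwise convergence on `M_{∞,1}`); in particular a dense `G_δ` set of `f ∈ M_{∞,1}`
have this maximal oscillation at all points of a dense `G_δ` subset of `K`. -/
theorem statement6 [MeasurableSpace Ω] (P : Measure Ω) [IsProbabilityMeasure P]
    (D : ℕ → Finset (Set Ω)) (hpart : IsPartitionSeq D) (hA : AssumptionA P D) :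
    (IsGδ {q : MartBall P D ∞ × Kt D | OscFullAt D q.1.1 q.2} ∧
     Dense {q : MartBall P D ∞ × Kt D | OscFullAt D q.1.1 q.2}) ∧
    ∃ T : Set (MartBall P D ∞), IsGδ T ∧ Dense T ∧ ∀ f ∈ T,
      IsGδ {x : Kt D | OscFullAt D f.1 x} ∧ Dense {x : Kt D | OscFullAt D f.1 x} := by
  refine ⟨⟨isGδ_setOf_oscFullAt hpart hA.1, dense_setOf_oscFullAt hpart hA⟩,
    {f | OscillatesBelowAtoms D f.1}, isGδ_setOf_oscillatesBelowAtoms hpart hA.1,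
    dense_setOf_oscillatesBelowAtoms hpart hA, fun f hf => ⟨?_,
      dense_setOf_oscFullAt_of_oscillatesBelowAtoms hpart hA.1 hf⟩⟩
  exact (isGδ_setOf_oscFullAt hpart hA.1).preimage (continuous_const.prodMk continuous_id)

end MartingalePaper
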